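/- arXiv:1912.07643 — 7 statements merged into one kernel-verified Lean document; each statement's English description precedes it below -/
import Mathlib

section
/- Let F be a finite field with q = |F| elements and let n, N be natural numbers with n ≤ N. Then the number of orbits of the action of GL(N,F) on the n-element subsets of the vector space F^N satisfies f_n(GL(N,F)) ≤ (n+1) · q^{⌊n²/4⌋}. -/
open Matrix MulAction Pointwise

/-- The action of `GL(N,F)` on `F^N` by matrix-vector multiplication. -/
instance glVecAction {F : Type*} [Field F] {N : ℕ} :
    MulAction (GL (Fin N) F) (Fin N → F) where
  smul g v := (g : Matrix (Fin N) (Fin N) F).mulVec v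
  one_smul v := by
    show ((1 : GL (Fin N) F) : Matrix (Fin N) (Fin N) F).mulVec v = v
    simp
  mul_smul g h v := by
    show ((g * h : GL (Fin N) F) : Matrix (Fin N) (Fin N) F).mulVec v
      = (g : Matrix (Fin N) (Fin N) F).mulVec ((h : Matrix (Fin N) (Fin N) F).mulVec v)
    simp [Matrix.mulVec_mulVec]

/-- The number of orbits of a `G`-action meeting a set `P` of states; for a `G`-invariant
`P` this is the number of orbits of `G` on `P`. -/
noncomputable def numOrbitsOn (G : Type*) {X : Type*} [Group G] [MulAction G X]
    (P : Set X) : ℕ :=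
  Nat.card (Quotient.mk (MulAction.orbitRel G X) '' P)

/-!
Choose a maximal linearly independent subset `B` of an `n`-element set `S`, of size `r`. The
other `n - r` elements of `S` are linear combinations of `B`, with an `(n - r) × r` coefficient
matrix `A`. Any two linearly independent `r`-families are related by a linear automorphism, so
`(r, A)` determines the orbit of `S`. Hence there are at most
`∑ r, q ^ (r * (n - r)) ≤ (n + 1) * q ^ ⌊n² / 4⌋` orbits.
-/

theorem numOrbitsOn_le_natCard {G X D : Type*} [Group G] [MulAction G X] [Finite D]
    {P : Set X} (R : X → D → Prop) (hP : ∀ x ∈ P, ∃ d, R x d)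
    (hR : ∀ x y d, R x d → R y d → y ∈ orbit G x) :
    numOrbitsOn G P ≤ Nat.card D := by
  choose f hf using hP
  refine Nat.card_le_card_of_injective (fun q : Quotient.mk _ '' P => f _ q.2.choose_spec.1) ?_
  rintro ⟨q, hq⟩ ⟨q', hq'⟩ h
  obtain ⟨hx, hxq⟩ := hq.choose_spec
  obtain ⟨hy, hyq⟩ := hq'.choose_spec
  replace h : f _ hx = f _ hy := h
  refine Subtype.ext (hxq.symm.trans (Eq.trans ?_ hyq))
  exact Quotient.sound (hR _ _ _ (hf _ hy) (h ▸ hf _ hx))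

theorem LinearIndependent.exists_linearEquiv_apply_eq {K V ι : Type*} [DivisionRing K]
    [AddCommGroup V] [Module K V] [Finite ι] {b b' : ι → V}
    (hb : LinearIndependent K b) (hb' : LinearIndependent K b') :
    ∃ g : V ≃ₗ[K] V, ∀ i, g (b i) = b' i := by
  have : FiniteDimensional K (Submodule.span K (Set.range b)) :=
    FiniteDimensional.span_of_finite K (Set.finite_range b)
  obtain ⟨g, hg⟩ := Submodule.exists_linearEquiv_restrict_eq
    (hb.linearCombinationEquiv.symm ≪≫ₗ hb'.linearCombinationEquiv)
  refine ⟨g, fun i => ?_⟩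
  simpa using (hg (hb.linearCombinationEquiv (Finsupp.single i 1))).symm

theorem exists_glVecAction_smul_eq {F : Type*} [Field F] {N : ℕ}
    (e : (Fin N → F) ≃ₗ[F] (Fin N → F)) : ∃ g : GL (Fin N) F, ∀ v, g • v = e v := by
  let g := GeneralLinearGroup.toLin.symm (LinearMap.GeneralLinearGroup.ofLinearEquiv e)
  refine ⟨g, fun v => ?_⟩
  have h := GeneralLinearGroup.toLin_apply g v
  simp only [g, MulEquiv.apply_symm_apply, LinearMap.GeneralLinearGroup.coe_ofLinearEquiv,
    mulVecBilin_apply] at h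
  exact h.symm

abbrev SubsetShape (K : Type*) (n : ℕ) := Σ r : Fin (n + 1), Matrix (Fin (n - r)) (Fin r) K

def HasShape {K V : Type*} [DivisionRing K] [AddCommGroup V] [Module K V] {n : ℕ}
    (S : Set V) (d : SubsetShape K n) : Prop :=
  ∃ b : Fin d.1 → V, LinearIndependent K b ∧
    S = Set.range (Sum.elim b fun k => ∑ i, d.2 k i • b i)

section

variable {K V : Type*} [DivisionRing K] [AddCommGroup V] [Module K V]

theorem Finset.exists_hasShape [DecidableEq V] (S : Finset V) :
    ∃ d : SubsetShape K S.card, HasShape (S : Set V) d := by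
  obtain ⟨B, hBS, hspan, hli⟩ := exists_linearIndependent K (S : Set V)
  obtain ⟨B, rfl⟩ := (S.finite_toSet.subset hBS).exists_finset_coe
  rw [Finset.coe_subset] at hBS
  let eB : Fin B.card ≃ B := B.equivFin.symm
  let eC : Fin (S.card - B.card) ≃ (S \ B : Finset V) :=
    (finCongr (Finset.card_sdiff_of_subset hBS).symm).trans (S \ B).equivFin.symm
  let b i : V := eB i
  have hrange : Set.range b = B := by
    rw [show b = Subtype.val ∘ eB from rfl, eB.surjective.range_comp, Subtype.range_coe]
  have hrangeC : Set.range (fun k => (eC k : V)) = ↑(S \ B) := by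
    rw [show (fun k => (eC k : V)) = Subtype.val ∘ eC from rfl, eC.surjective.range_comp,
      Subtype.range_coe]
  have hC k : (eC k : V) ∈ Submodule.span K (Set.range b) := by
    rw [hrange, hspan]
    exact Submodule.subset_span (Finset.mem_sdiff.mp (eC k).2).1
  choose A hA using fun k => Submodule.mem_span_range_iff_exists_fun K |>.mp (hC k)
  refine ⟨⟨⟨B.card, Nat.lt_succ_of_le (Finset.card_le_card hBS)⟩, A⟩, b,
    hli.comp eB eB.injective, ?_⟩
  simp only [hA, Set.Sum.elim_range]
  rw [hrange, hrangeC, ← Finset.coe_union, Finset.union_sdiff_of_subset hBS]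

theorem HasShape.exists_linearEquiv_image_eq {n : ℕ} {S T : Set V} {d : SubsetShape K n}
    (hS : HasShape S d) (hT : HasShape T d) : ∃ g : V ≃ₗ[K] V, g '' S = T := by
  obtain ⟨b, hb, rfl⟩ := hS
  obtain ⟨b', hb', rfl⟩ := hT
  obtain ⟨g, hg⟩ := hb.exists_linearEquiv_apply_eq hb'
  refine ⟨g, ?_⟩
  rw [← Set.range_comp]
  congr 1
  ext (i | k) <;> simp [hg]

end

theorem mul_sub_le_sq_div_four (n r : ℕ) : r * (n - r) ≤ n ^ 2 / 4 := by
  rw [Nat.le_div_iff_mul_le four_pos]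
  rcases le_total r n with h | h
  · obtain ⟨m, rfl⟩ := Nat.exists_eq_add_of_le h
    rw [Nat.add_sub_cancel_left]
    nlinarith [sq_nonneg ((m : ℤ) - r)]
  · simp [Nat.sub_eq_zero_of_le h]

theorem natCard_subsetShape_le (K : Type*) [Fintype K] [Nonempty K] (n : ℕ) :
    Nat.card (SubsetShape K n) ≤ (n + 1) * Fintype.card K ^ (n ^ 2 / 4) := by
  calc Nat.card (SubsetShape K n)
      = ∑ r : Fin (n + 1), Fintype.card K ^ (r * (n - r)) := by
        rw [Nat.card_sigma]
        simp only [Fintype.card_eq_nat_card, Matrix, Nat.card_fun, Nat.card_fin, pow_mul]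
    _ ≤ ∑ _r : Fin (n + 1), Fintype.card K ^ (n ^ 2 / 4) :=
        Finset.sum_le_sum fun r _ =>
          Nat.pow_le_pow_right Fintype.card_pos (mul_sub_le_sq_div_four n r)
    _ = (n + 1) * Fintype.card K ^ (n ^ 2 / 4) := by simp

theorem gl_orbits_on_subsets_le_general (F : Type*) [Field F] [Fintype F] [DecidableEq F]
    (N n : ℕ) :
    numOrbitsOn (GL (Fin N) F) {S : Finset (Fin N → F) | S.card = n}
      ≤ (n + 1) * Fintype.card F ^ (n ^ 2 / 4) := by
  refine le_trans ?_ (natCard_subsetShape_le F n)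
  refine numOrbitsOn_le_natCard (fun S d => HasShape (S : Set (Fin N → F)) d) ?_ ?_
  · rintro S rfl
    exact S.exists_hasShape
  · intro S T d hS hT
    obtain ⟨e, he⟩ := hS.exists_linearEquiv_image_eq hT
    obtain ⟨g, hg⟩ := exists_glVecAction_smul_eq e
    refine ⟨g, Finset.coe_injective ?_⟩
    rw [Finset.coe_smul_finset, ← he, ← Set.image_smul]
    exact Set.image_congr fun v _ => hg v

/-- The number of orbits of `GL(N,F)` on `n`-element subsets of `F^N` is at most
`(n+1) * q^⌊n²/4⌋`. -/
theorem gl_orbits_on_subsets_le (F : Type*) [Field F] [Fintype F] [DecidableEq F]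
    (N n : ℕ) (hn : n ≤ N) :
    numOrbitsOn (GL (Fin N) F) {S : Finset (Fin N → F) | S.card = n}
      ≤ (n + 1) * Fintype.card F ^ (n ^ 2 / 4) :=
  gl_orbits_on_subsets_le_general F N n
end

section
/- Let F be a finite field with q = |F| elements and let K ≤ n ≤ N be natural numbers. Then the number of orbits of the action of GL(N,F) on the collection of n-element subsets S of F^N whose linear span has dimension exactly K is at most q^{K(n−K)}. -/
/-!
A finite set `S` whose span has dimension `K` contains a basis `v₁, …, v_K` of that span, and
each of its remaining `n - K` elements is a combination `∑ⱼ cᵢⱼ vⱼ`. As `GL(N,F)` acts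
transitively on linearly independent `K`-tuples, the orbit of `S` is determined by the
coefficient matrix `c`, and there are only `q^(K(n-K))` of those.
-/

open Matrix MulAction Pointwise

theorem Finset.image_univ_val_equiv_symm {α : Type*} [DecidableEq α] {k : ℕ} {s : Finset α}
    (e : s ≃ Fin k) :
    Finset.univ.image (fun j => (e.symm j : α)) = s := by
  ext x
  simp only [Finset.mem_image, Finset.mem_univ, true_and]
  exact ⟨by rintro ⟨j, rfl⟩; exact (e.symm j).2, fun hx => ⟨e ⟨x, hx⟩, by simp⟩⟩

section

open Module Submodule

variable {F V W : Type*} [Field F] [AddCommGroup V] [Module F V] [AddCommGroup W] [Module F W]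

theorem exists_linearEquiv_apply_eq_of_linearIndependent [FiniteDimensional F V] {ι : Type*}
    [Fintype ι] {v w : ι → V} (hv : LinearIndependent F v) (hw : LinearIndependent F w) :
    ∃ e : V ≃ₗ[F] V, ∀ i, e (v i) = w i := by
  obtain ⟨p, hp⟩ := (span F (Set.range v)).exists_isCompl
  obtain ⟨q, hq⟩ := (span F (Set.range w)).exists_isCompl
  have hpq : finrank F p = finrank F q := by
    have hvp := finrank_add_eq_of_isCompl hp
    have hwq := finrank_add_eq_of_isCompl hq
    rw [finrank_span_eq_card hv] at hvp
    rw [finrank_span_eq_card hw] at hwq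
    omega
  refine ⟨(prodEquivOfIsCompl _ _ hp).symm ≪≫ₗ
    ((Basis.span hv).equiv (Basis.span hw) (Equiv.refl ι)).prodCongr
      (LinearEquiv.ofFinrankEq p q hpq) ≪≫ₗ prodEquivOfIsCompl _ _ hq, fun i => ?_⟩
  have hvi : v i = ((Basis.span hv i : span F (Set.range v)) : V) := by rw [Basis.span_apply]
  rw [LinearEquiv.trans_apply, LinearEquiv.trans_apply, hvi, prodEquivOfIsCompl_symm_apply_left]
  simp only [LinearEquiv.prodCongr_apply, Basis.equiv_apply, Equiv.refl_apply, map_zero,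
    coe_prodEquivOfIsCompl', ZeroMemClass.coe_zero, add_zero]
  rw [Basis.span_apply]

variable [DecidableEq V]

def withLinearCombinations {K m : ℕ} (v : Fin K → V) (c : Fin m → Fin K → F) : Finset V :=
  Finset.univ.image v ∪ Finset.univ.image fun i => ∑ j, c i j • v j

theorem image_withLinearCombinations [DecidableEq W] {K m : ℕ} (f : V →ₗ[F] W)
    (v : Fin K → V) (c : Fin m → Fin K → F) :
    (withLinearCombinations v c).image f = withLinearCombinations (f ∘ v) c := by
  simp only [withLinearCombinations, Finset.image_union, Finset.image_image, Function.comp_def,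
    map_sum, map_smul]

theorem Finset.exists_eq_withLinearCombinations {n K : ℕ} (S : Finset V) (hS : S.card = n)
    (hK : finrank F (span F (S : Set V)) = K) :
    ∃ (v : Fin K → V) (c : Fin (n - K) → Fin K → F),
      LinearIndependent F v ∧ S = withLinearCombinations v c := by
  obtain ⟨b, hbS, hbspan, hb⟩ := exists_linearIndependent F (S : Set V)
  lift b to Finset V using S.finite_toSet.subset hbS
  have hbK : b.card = K := by rw [← hK, ← hbspan, finrank_span_finset_eq_card hb]
  have hrest : (S \ b).card = n - K := by
    rw [Finset.card_sdiff_of_subset (by exact_mod_cast hbS), hS, hbK]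
  set v : Fin K → V := fun j => (b.equivFinOfCardEq hbK).symm j
  set u : Fin (n - K) → V := fun i => ((S \ b).equivFinOfCardEq hrest).symm i
  have hv : Finset.univ.image v = b := Finset.image_univ_val_equiv_symm _
  have hu : Finset.univ.image u = S \ b := Finset.image_univ_val_equiv_symm _
  have hu_mem : ∀ i, u i ∈ span F (Set.range v) := by
    intro i
    rw [← Set.image_univ, ← Finset.coe_univ, ← Finset.coe_image, hv, hbspan]
    exact subset_span (Finset.mem_sdiff.mp (((S \ b).equivFinOfCardEq hrest).symm i).2).1
  choose c hc using fun i => (mem_span_range_iff_exists_fun F).mp (hu_mem i)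
  refine ⟨v, c, ?_, ?_⟩
  · exact hb.comp _ (b.equivFinOfCardEq hbK).symm.injective
  · rw [withLinearCombinations, hv, funext hc, hu,
      Finset.union_sdiff_of_subset (by exact_mod_cast hbS)]

def Matrix.GeneralLinearGroup.ofLinearEquiv {n : Type*} [Fintype n] [DecidableEq n]
    (e : (n → F) ≃ₗ[F] (n → F)) : GL n F where
  val := LinearMap.toMatrix' e
  inv := LinearMap.toMatrix' e.symm
  val_inv := by rw [← LinearMap.toMatrix'_comp]; simp
  inv_val := by rw [← LinearMap.toMatrix'_comp]; simp

theorem Matrix.GeneralLinearGroup.ofLinearEquiv_smul {N : ℕ}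
    (e : (Fin N → F) ≃ₗ[F] (Fin N → F)) (x : Fin N → F) : ofLinearEquiv e • x = e x :=
  LinearMap.toMatrix'_mulVec (e : (Fin N → F) →ₗ[F] (Fin N → F)) x

theorem exists_gl_smul_eq_of_linearIndependent {N : ℕ} {ι : Type*} [Fintype ι]
    {v w : ι → Fin N → F} (hv : LinearIndependent F v) (hw : LinearIndependent F w) :
    ∃ g : GL (Fin N) F, ∀ i, g • v i = w i := by
  obtain ⟨e, he⟩ := exists_linearEquiv_apply_eq_of_linearIndependent hv hw
  exact ⟨.ofLinearEquiv e, fun i => by rw [GeneralLinearGroup.ofLinearEquiv_smul, he]⟩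

theorem gl_smul_withLinearCombinations [DecidableEq F] {N K m : ℕ} (g : GL (Fin N) F)
    (v : Fin K → Fin N → F) (c : Fin m → Fin K → F) :
    g • withLinearCombinations v c = withLinearCombinations (fun j => g • v j) c :=
  image_withLinearCombinations (Matrix.mulVecLin (g : Matrix (Fin N) (Fin N) F)) v c

end

theorem gl_orbits_on_subsets_of_rank_le_general (F : Type*) [Field F] [Fintype F] [DecidableEq F]
    (N n K : ℕ) :
    numOrbitsOn (GL (Fin N) F)
      {S : Finset (Fin N → F) | S.card = n ∧
        Module.finrank F (Submodule.span F (S : Set (Fin N → F))) = K}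
      ≤ Fintype.card F ^ (K * (n - K)) := by
  set P : Set (Finset (Fin N → F)) :=
    {S | S.card = n ∧ Module.finrank F (Submodule.span F (S : Set (Fin N → F))) = K}
  rcases P.eq_empty_or_nonempty with hP | ⟨S₀, hS₀, hK₀⟩
  · simp [numOrbitsOn, hP]
  obtain ⟨v₀, -, hv₀, -⟩ := S₀.exists_eq_withLinearCombinations hS₀ hK₀
  have hreps : Quotient.mk _ '' P ⊆
      Set.range fun c : Fin (n - K) → Fin K → F =>
        Quotient.mk (MulAction.orbitRel (GL (Fin N) F) _) (withLinearCombinations v₀ c) := by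
    rintro _ ⟨S, ⟨hS, hK⟩, rfl⟩
    obtain ⟨v, c, hv, rfl⟩ := S.exists_eq_withLinearCombinations hS hK
    obtain ⟨g, hg⟩ := exists_gl_smul_eq_of_linearIndependent hv hv₀
    exact ⟨c, Quotient.sound
      ⟨g, (gl_smul_withLinearCombinations g v c).trans (by simp only [hg])⟩⟩
  calc numOrbitsOn _ P ≤ Nat.card (Set.range _) := Nat.card_mono (Set.finite_range _) hreps
    _ ≤ Nat.card (Fin (n - K) → Fin K → F) := Finite.card_range_le _
    _ = Fintype.card F ^ (K * (n - K)) := by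
      simp [Nat.card_eq_fintype_card, ← pow_mul]

/-- The number of orbits of `GL(N,F)` on `n`-element subsets of `F^N` whose linear span
has dimension exactly `K` is at most `q^(K(n-K))`. -/
theorem gl_orbits_on_subsets_of_rank_le (F : Type*) [Field F] [Fintype F] [DecidableEq F]
    (N n K : ℕ) (hK : K ≤ n) (hn : n ≤ N) :
    numOrbitsOn (GL (Fin N) F)
      {S : Finset (Fin N → F) | S.card = n ∧
        Module.finrank F (Submodule.span F (S : Set (Fin N → F))) = K}
      ≤ Fintype.card F ^ (K * (n - K)) :=
  gl_orbits_on_subsets_of_rank_le_general F N n K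
end

section
/- Let F be a finite field with q = |F| elements, let m ≤ n ≤ N be natural numbers, and let W be the subspace of F^N spanned by the first m standard basis vectors. Then the number of orbits f_n(GL(N,F)) of GL(N,F) on n-element subsets of F^N satisfies f_n(GL(N,F)) · |GL(m,F)| ≥ #{S ⊆ F^N : |S| = n, S ⊆ W, and S spans W}. -/
open Matrix MulAction Pointwise

/-!
Send each `n`-subset `S` of `W` spanning `W` to its `GL(N,F)`-orbit. If `g • S₀ = S` for two such
subsets, then `g` maps `W = span S₀` onto `span S = W`, and `S` is the image of `S₀` under the
restriction `g|_W ∈ GL(W) ≅ GL(m,F)`. Hence every orbit contains at most `|GL(m,F)|` of these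
subsets.
-/

section OrbitCounting

variable {G X : Type*} [Group G] [MulAction G X] [Finite X]

theorem numOrbitsOn_mono {P Q : Set X} (h : P ⊆ Q) : numOrbitsOn G P ≤ numOrbitsOn G Q :=
  Nat.card_mono (Set.toFinite _) (Set.image_mono h)

theorem ncard_le_numOrbitsOn_mul (P : Set X) (k : ℕ)
    (hk : ∀ x ∈ P, (P ∩ orbit G x).ncard ≤ k) : P.ncard ≤ numOrbitsOn G P * k := by
  classical
  have := Fintype.ofFinite X
  have hfiber : ∀ x, {y ∈ P.toFinset | Quotient.mk (orbitRel G X) y = Quotient.mk _ x} =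
      (P ∩ orbit G x).toFinset := by
    intro x
    ext y
    simp [Quotient.eq, orbitRel_apply]
  calc P.ncard = P.toFinset.card := Set.ncard_eq_toFinset_card' P
    _ ≤ k * (P.toFinset.image (Quotient.mk (orbitRel G X))).card := by
      refine Finset.card_le_mul_card_image _ _ fun c hc => ?_
      obtain ⟨x, hx, rfl⟩ := Finset.mem_image.mp hc
      rw [hfiber, ← Set.ncard_eq_toFinset_card']
      exact hk x (Set.mem_toFinset.mp hx)
    _ = numOrbitsOn G P * k := by
      rw [mul_comm, numOrbitsOn, Nat.card_coe_set_eq, ← Set.ncard_coe_finset]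
      simp

end OrbitCounting

theorem ncard_spanning_linearEquiv_images_le {R V : Type*} [Ring R] [AddCommGroup V]
    [Module R V] [DecidableEq V] {W : Submodule R V} [Finite W] {S₀ : Finset V}
    (hS₀ : Submodule.span R (S₀ : Set V) = W) :
    {S : Finset V | ∃ g : V ≃ₗ[R] V, S₀.image g = S ∧ Submodule.span R (S : Set V) = W}.ncard
      ≤ Nat.card (W ≃ₗ[R] W) := by
  classical
  have hS₀W : ∀ x ∈ S₀, x ∈ W := fun x hx => hS₀ ▸ Submodule.subset_span hx
  let imageUnder : (W ≃ₗ[R] W) → Finset V := fun e =>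
    (S₀.subtype (· ∈ W)).image fun w => (e w : V)
  have : Finite (W ≃ₗ[R] W) := Finite.of_injective _ DFunLike.coe_injective
  calc _ ≤ (Set.range imageUnder).ncard := Set.ncard_le_ncard ?_ (Set.finite_range _)
    _ = Nat.card (Set.range imageUnder) := (Nat.card_coe_set_eq _).symm
    _ ≤ Nat.card (W ≃ₗ[R] W) := Finite.card_range_le _
  rintro S ⟨g, rfl, hspan⟩
  have hgW : W.map (g : V →ₗ[R] V) = W := by
    rwa [Finset.coe_image, ← LinearEquiv.coe_coe, Submodule.span_image, hS₀] at hspan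
  refine ⟨(g.submoduleMap W).trans (LinearEquiv.ofEq _ _ hgW), ?_⟩
  ext y
  simp only [imageUnder, LinearEquiv.trans_apply, LinearEquiv.coe_ofEq_apply,
    LinearEquiv.submoduleMap_apply, Finset.mem_image, Finset.mem_subtype, Subtype.exists,
    exists_and_left, exists_prop]
  exact ⟨fun ⟨a, ha, _, h⟩ => ⟨a, ha, h⟩, fun ⟨a, ha, h⟩ => ⟨a, ha, hS₀W a ha, h⟩⟩

theorem card_linearEquiv_eq_card_GL_of_finrank_eq {K V : Type*} [Field K] [AddCommGroup V]
    [Module K V] [FiniteDimensional K V] {m : ℕ} (h : Module.finrank K V = m) :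
    Nat.card (V ≃ₗ[K] V) = Nat.card (GL (Fin m) K) :=
  Nat.card_congr <| ((GeneralLinearGroup.toLin' (Module.finBasisOfFinrankEq K V h)).trans
    (LinearMap.GeneralLinearGroup.generalLinearEquiv K V)).toEquiv.symm

/-- Lower bound step: the number of orbits `f_n(GL(N,F))` on `n`-element subsets of `F^N`,
multiplied by `|GL(m,F)|`, is at least the number of `n`-element subsets of the span `W`
of the first `m` standard basis vectors that span `W`. -/
theorem gl_orbits_mul_card_ge (F : Type*) [Field F] [Fintype F] [DecidableEq F]
    (N n m : ℕ) (hmn : m ≤ n) (hnN : n ≤ N) :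
    Nat.card {S : Finset (Fin N → F) |
        S.card = n ∧
        (S : Set (Fin N → F)) ⊆
          (Submodule.span F
            (Set.range fun i : Fin m => (Pi.single (Fin.castLE (hmn.trans hnN) i) (1 : F) : Fin N → F)) :
              Set (Fin N → F)) ∧
        Submodule.span F (S : Set (Fin N → F)) =
          Submodule.span F
            (Set.range fun i : Fin m => (Pi.single (Fin.castLE (hmn.trans hnN) i) (1 : F) : Fin N → F))}
      ≤ numOrbitsOn (GL (Fin N) F) {S : Finset (Fin N → F) | S.card = n}
          * Nat.card (GL (Fin m) F) := by
  set W := Submodule.span F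
    (Set.range fun i : Fin m => (Pi.single (Fin.castLE (hmn.trans hnN) i) (1 : F) : Fin N → F))
  set P := {S : Finset (Fin N → F) | S.card = n ∧ (S : Set (Fin N → F)) ⊆ W ∧
    Submodule.span F (S : Set (Fin N → F)) = W}
  have hW : Module.finrank F W = m :=
    (finrank_span_eq_card ((Pi.linearIndependent_single_one (Fin N) F).comp _
      (Fin.castLE_injective _))).trans (Fintype.card_fin m)
  have hfiber : ∀ S₀ ∈ P, (P ∩ orbit (GL (Fin N) F) S₀).ncard ≤ Nat.card (W ≃ₗ[F] W) := by
    rintro S₀ ⟨-, -, hS₀⟩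
    refine (Set.ncard_le_ncard ?_ (Set.toFinite _)).trans
      (ncard_spanning_linearEquiv_images_le hS₀)
    rintro _ ⟨⟨-, -, hspan⟩, g, rfl⟩
    exact ⟨(GeneralLinearGroup.toLin g).toLinearEquiv, rfl, hspan⟩
  calc Nat.card P = P.ncard := Nat.card_coe_set_eq P
    _ ≤ numOrbitsOn (GL (Fin N) F) P * Nat.card (W ≃ₗ[F] W) :=
      ncard_le_numOrbitsOn_mul P _ hfiber
    _ ≤ numOrbitsOn (GL (Fin N) F) {S : Finset (Fin N → F) | S.card = n}
          * Nat.card (GL (Fin m) F) := by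
      rw [card_linearEquiv_eq_card_GL_of_finrank_eq hW]
      exact Nat.mul_le_mul_right _ (numOrbitsOn_mono fun S hS => hS.1)
end

section
/- Let X be a finite set, G a subgroup of the symmetric group Sym(X), and Φ a weighted alphabet containing an element a with w(a) = 1. Then for every natural number n ≤ |X|, the number of G-orbits on functions of total weight n satisfies b_n(G) ≥ f_n(G), where f_n(G) is the number of G-orbits on n-element subsets of X. -/
open MulAction Pointwise

/-- The action of a subgroup `G` of `Sym(X)` on functions `X → Φ` given by
`(σ • f) x = f (σ⁻¹ x)`. -/
instance permFunAction {X Φ : Type*} (G : Subgroup (Equiv.Perm X)) :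
    MulAction G (X → Φ) where
  smul σ f := fun x => f ((σ : Equiv.Perm X)⁻¹ x)
  one_smul f := by
    show (fun x => f (((1 : G) : Equiv.Perm X)⁻¹ x)) = f
    funext x; simp
  mul_smul σ τ f := by
    show (fun x => f (((σ * τ : G) : Equiv.Perm X)⁻¹ x))
      = fun x => (fun y => f ((τ : Equiv.Perm X)⁻¹ y)) ((σ : Equiv.Perm X)⁻¹ x)
    funext x; simp [mul_inv_rev]

/-- If the weighted alphabet `Φ` contains a letter of weight `1`, then the number `b_n(G)`
of `G`-orbits on functions `X → Φ` of total weight `n` is at least the number `f_n(G)` of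
`G`-orbits on `n`-element subsets of `X`. -/
theorem fn_le_bn {X Φ : Type*} [Fintype X] [DecidableEq X]
    (G : Subgroup (Equiv.Perm X)) (w : Φ → ℕ) (vac : Φ)
    (hvac : ∀ b : Φ, w b = 0 ↔ b = vac)
    (hfin : ∀ n : ℕ, {b : Φ | w b ≤ n}.Finite)
    (a : Φ) (ha : w a = 1)
    (n : ℕ) (hn : n ≤ Fintype.card X) :
    numOrbitsOn G {S : Finset X | S.card = n}
      ≤ numOrbitsOn G {f : X → Φ | ∑ x : X, w (f x) = n} := by
  classical
  have hvacw : w vac = 0 := (hvac vac).mpr rfl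
  have hane : a ≠ vac := fun h => by rw [h, hvacw] at ha; exact one_ne_zero ha.symm
  set F : Finset X → (X → Φ) := fun S x => if x ∈ S then a else vac with hF
  -- equivariance
  have hsmul : ∀ (σ : G) (S : Finset X), σ • F S = F (σ • S) := by
    intro σ S
    funext x
    show F S ((σ : Equiv.Perm X)⁻¹ x) = F (σ • S) x
    have : (σ : Equiv.Perm X)⁻¹ x ∈ S ↔ x ∈ σ • S := by
      have h := Finset.inv_smul_mem_iff (a := σ) (b := x) (s := S)
      simpa [Subgroup.smul_def, Equiv.Perm.smul_def] using h
    simp only [hF]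
    rw [if_congr this rfl rfl]
  -- injectivity of F
  have hFinj : Function.Injective F := by
    intro S T h
    ext x
    have hx := congrFun h x
    simp only [hF] at hx
    constructor
    · intro hxS
      by_contra hxT
      rw [if_pos hxS, if_neg hxT] at hx; exact hane hx
    · intro hxT
      by_contra hxS
      rw [if_neg hxS, if_pos hxT] at hx; exact hane hx.symm
  -- the induced map on quotients
  set Fbar : Quotient (orbitRel G (Finset X)) → Quotient (orbitRel G (X → Φ)) :=
    Quotient.map F (by
      intro S T hST
      obtain ⟨σ, hσ⟩ := hST
      have hσ' : σ • T = S := hσ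
      exact ⟨σ, show σ • F T = F S by rw [hsmul, hσ']⟩) with hFbar
  have hFbarmk : ∀ S : Finset X, Fbar (Quotient.mk _ S) = Quotient.mk _ (F S) :=
    fun S => rfl
  have hFbarinj : Function.Injective Fbar := by
    intro q₁ q₂
    induction q₁ using Quotient.ind with
    | _ S =>
    induction q₂ using Quotient.ind with
    | _ T =>
    intro h
    rw [hFbarmk, hFbarmk] at h
    obtain ⟨σ, hσ⟩ := Quotient.exact h
    have hσ' : σ • F T = F S := hσ
    apply Quotient.sound
    refine ⟨σ, hFinj ?_⟩
    rw [← hsmul, hσ']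
  -- weight of F S
  have hweight : ∀ S : Finset X, S.card = n → F S ∈ {f : X → Φ | ∑ x : X, w (f x) = n} := by
    intro S hS
    show ∑ x : X, w (F S x) = n
    have : ∀ x : X, w (F S x) = if x ∈ S then 1 else 0 := by
      intro x
      simp only [hF]
      by_cases hx : x ∈ S <;> simp [hx, ha, hvacw]
    rw [Finset.sum_congr rfl (fun x _ => this x)]
    rw [Finset.sum_ite_mem, Finset.univ_inter, Finset.sum_const, smul_eq_mul, mul_one, hS]
  -- finiteness of target
  have hfin' : Set.Finite {f : X → Φ | ∑ x : X, w (f x) = n} := by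
    apply Set.Finite.subset (Set.Finite.pi (fun _ : X => hfin n))
    intro f hf
    simp only [Set.mem_pi, Set.mem_univ, true_implies, Set.mem_setOf_eq]
    intro x
    calc w (f x) ≤ ∑ y : X, w (f y) :=
          Finset.single_le_sum (f := fun y => w (f y)) (fun i _ => Nat.zero_le _) (Finset.mem_univ x)
      _ = n := hf
  -- main bound
  unfold numOrbitsOn
  rw [Nat.card_coe_set_eq, Nat.card_coe_set_eq]
  have hsub : Fbar '' (Quotient.mk (orbitRel G (Finset X)) '' {S : Finset X | S.card = n})
      ⊆ Quotient.mk (orbitRel G (X → Φ)) '' {f : X → Φ | ∑ x : X, w (f x) = n} := by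
    rintro _ ⟨_, ⟨S, hS, rfl⟩, rfl⟩
    exact ⟨F S, hweight S hS, rfl⟩
  calc (Quotient.mk (orbitRel G (Finset X)) '' {S : Finset X | S.card = n}).ncard
      = (Fbar '' (Quotient.mk (orbitRel G (Finset X)) '' {S : Finset X | S.card = n})).ncard :=
        (Set.ncard_image_of_injective _ hFbarinj).symm
    _ ≤ _ := Set.ncard_le_ncard hsub (hfin'.image _)
end

section
/- Let V be a vector space over a field F and let K₁, K₂, K₃ be finite-dimensional subspaces of V such that K₁ ⊆ (K₁ ∩ K₂) + (K₁ ∩ K₃), K₂ ⊆ (K₂ ∩ K₁) + (K₂ ∩ K₃), and K₃ ⊆ (K₃ ∩ K₁) + (K₃ ∩ K₂). Then 2·dim(K₁ + K₂ + K₃) + dim(K₁ ∩ K₂ ∩ K₃) ≤ dim K₁ + dim K₂ + dim K₃. -/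
open Module

/-- If each of three finite-dimensional subspaces `K₁, K₂, K₃` of a vector space is contained
in the sum of its intersections with the other two, then
`2·dim(K₁ + K₂ + K₃) + dim(K₁ ∩ K₂ ∩ K₃) ≤ dim K₁ + dim K₂ + dim K₃`. -/
theorem two_mul_finrank_sup_add_finrank_inf_le {F V : Type*} [Field F] [AddCommGroup V]
    [Module F V] (K₁ K₂ K₃ : Submodule F V)
    [FiniteDimensional F K₁] [FiniteDimensional F K₂] [FiniteDimensional F K₃]
    (h₁ : K₁ ≤ (K₁ ⊓ K₂) ⊔ (K₁ ⊓ K₃))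
    (h₂ : K₂ ≤ (K₂ ⊓ K₁) ⊔ (K₂ ⊓ K₃))
    (h₃ : K₃ ≤ (K₃ ⊓ K₁) ⊔ (K₃ ⊓ K₂)) :
    2 * finrank F ↥(K₁ ⊔ K₂ ⊔ K₃) + finrank F ↥(K₁ ⊓ K₂ ⊓ K₃)
      ≤ finrank F ↥K₁ + finrank F ↥K₂ + finrank F ↥K₃ := by
  have e1 : (K₁ ⊓ K₂) ⊔ (K₁ ⊓ K₃) = K₁ :=
    le_antisymm (sup_le inf_le_left inf_le_left) h₁
  have e2 : (K₂ ⊓ K₁) ⊔ (K₂ ⊓ K₃) = K₂ :=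
    le_antisymm (sup_le inf_le_left inf_le_left) h₂
  have e3 : (K₃ ⊓ K₁) ⊔ (K₃ ⊓ K₂) = K₃ :=
    le_antisymm (sup_le inf_le_left inf_le_left) h₃
  have i1 : (K₁ ⊓ K₂) ⊓ (K₁ ⊓ K₃) = K₁ ⊓ K₂ ⊓ K₃ := by
    ext x; simp only [Submodule.mem_inf]; tauto
  have i2 : (K₂ ⊓ K₁) ⊓ (K₂ ⊓ K₃) = K₁ ⊓ K₂ ⊓ K₃ := by
    ext x; simp only [Submodule.mem_inf]; tauto
  have i3 : (K₃ ⊓ K₁) ⊓ (K₃ ⊓ K₂) = K₁ ⊓ K₂ ⊓ K₃ := by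
    ext x; simp only [Submodule.mem_inf]; tauto
  have c21 : K₂ ⊓ K₁ = K₁ ⊓ K₂ := inf_comm _ _
  have c31 : K₃ ⊓ K₁ = K₁ ⊓ K₃ := inf_comm _ _
  have c32 : K₃ ⊓ K₂ = K₂ ⊓ K₃ := inf_comm _ _
  have s3 : K₁ ⊔ K₂ ⊔ K₃ = K₁ ⊔ K₂ :=
    sup_eq_left.mpr (h₃.trans (sup_le (inf_le_right.trans le_sup_left)
      (inf_le_right.trans le_sup_right)))
  have s1 : K₁ ⊔ K₂ ⊔ K₃ = K₂ ⊔ K₃ := by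
    have : K₁ ≤ K₂ ⊔ K₃ := h₁.trans (sup_le (inf_le_right.trans le_sup_left)
      (inf_le_right.trans le_sup_right))
    rw [sup_assoc, sup_eq_right.mpr this]
  have s2 : K₁ ⊔ K₂ ⊔ K₃ = K₁ ⊔ K₃ := by
    have : K₂ ≤ K₁ ⊔ K₃ := h₂.trans (sup_le (inf_le_right.trans le_sup_left)
      (inf_le_right.trans le_sup_right))
    rw [sup_right_comm]; exact sup_eq_left.mpr this
  have d1 := Submodule.finrank_sup_add_finrank_inf_eq (K₁ ⊓ K₂) (K₁ ⊓ K₃)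
  rw [e1, i1] at d1
  have d2 := Submodule.finrank_sup_add_finrank_inf_eq (K₂ ⊓ K₁) (K₂ ⊓ K₃)
  rw [e2, i2, c21] at d2
  have d3 := Submodule.finrank_sup_add_finrank_inf_eq (K₃ ⊓ K₁) (K₃ ⊓ K₂)
  rw [e3, i3, c31, c32] at d3
  have g12 := Submodule.finrank_sup_add_finrank_inf_eq K₁ K₂
  rw [← s3] at g12
  have g13 := Submodule.finrank_sup_add_finrank_inf_eq K₁ K₃
  rw [← s2] at g13
  have g23 := Submodule.finrank_sup_add_finrank_inf_eq K₂ K₃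
  rw [← s1] at g23
  omega
end

section
/- Let F be a finite field with q = |F| elements and let K₁, K₂, K₃, n₃, S be natural numbers with K₁ + K₂ + K₃ = 2S + n₃. Writing c(M) := |GL(M,F)|, the sequence q^{2N n₃} · c(N−K₁) · c(N−K₂) · c(N−K₃) / ( c(N) · c(N−S)² ) converges, as N → ∞, to q^{K₁² + K₂² + K₃² − 2S²}. In particular, the multiplicity factor M(κ,N)² = |GL(N−K₁,F)| · |GL(N−K₂,F)| · |GL(N−K₃,F)| / ( |GL(N,F)| · |GL(N−S,F)|² ) appearing in the GL(N,q) permutation orbifold converges as N → ∞, and is O(q^{−2Nn₃}). -/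
open Filter Matrix Topology

/-! Write `|GL(M, F)| = q^{M²} · P(M)` with `P(M) = ∏_{i=1}^{M} (1 - q^{-i})`. Once `N` exceeds all
indices, the relation `K₁ + K₂ + K₃ = 2S + n₃` makes the terms linear in `N` cancel from the exponent of
`q`, which becomes the constant `K₁² + K₂² + K₃² - 2S²`. What remains is a product of quotients
`P(N - K) / P(N)`, each the reciprocal of `K` factors `1 - q^{-j}` with `j > N - K`, hence tending to `1`. -/

noncomputable def glFactor (q : ℝ) (M : ℕ) : ℝ := ∏ i ∈ Finset.range M, (1 - q⁻¹ ^ (i + 1))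

noncomputable def glOrder (q : ℝ) (M : ℕ) : ℝ := q ^ (M ^ 2) * glFactor q M

theorem card_GL_fin_eq_glOrder (F : Type*) [Field F] [Fintype F] (M : ℕ) :
    (Nat.card (GL (Fin M) F) : ℝ) = glOrder (Fintype.card F) M := by
  set q : ℝ := (Fintype.card F : ℝ)
  have hq : 1 < Fintype.card F := Fintype.one_lt_card
  have hq₀ : q ≠ 0 := by positivity
  have hterm (i : Fin M) :
      ((Fintype.card F ^ M - Fintype.card F ^ (i : ℕ) : ℕ) : ℝ) = q ^ M * (1 - q⁻¹ ^ (M - i)) := by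
    rw [Nat.cast_sub (Nat.pow_le_pow_right hq.le i.2.le), mul_one_sub, inv_pow,
      ← pow_sub₀ q hq₀ (Nat.sub_le M i), Nat.sub_sub_self i.2.le]
    push_cast
    rfl
  rw [card_GL_field, Nat.cast_prod, Finset.prod_congr rfl fun i _ => hterm i,
    Finset.prod_mul_distrib, Finset.prod_const, Finset.card_univ, Fintype.card_fin, ← pow_mul, ← sq,
    Fin.prod_univ_eq_prod_range (fun i => 1 - q⁻¹ ^ (M - i)), ← Finset.prod_range_reflect, glOrder,
    glFactor]
  congr 1
  refine Finset.prod_congr rfl fun j hj => ?_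
  rw [Finset.mem_range] at hj
  congr 2
  omega

theorem glFactor_add (q : ℝ) (M K : ℕ) :
    glFactor q (M + K) = glFactor q M * ∏ j ∈ Finset.range K, (1 - q⁻¹ ^ (M + j + 1)) :=
  Finset.prod_range_add _ M K

theorem multiplicity_exponent_eq {K₁ K₂ K₃ n₃ S : ℕ} (h : K₁ + K₂ + K₃ = 2 * S + n₃) (N : ℤ) :
    2 * N * n₃ + (N - K₁) ^ 2 + (N - K₂) ^ 2 + (N - K₃) ^ 2 =
      ((K₁ : ℤ) ^ 2 + (K₂ : ℤ) ^ 2 + (K₃ : ℤ) ^ 2 - 2 * (S : ℤ) ^ 2) + (N ^ 2 + 2 * (N - S) ^ 2) := by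
  have hZ : (K₁ + K₂ + K₃ : ℤ) = 2 * S + n₃ := by exact_mod_cast h
  linear_combination (-2 * N) * hZ

section

variable {q : ℝ}

theorem one_sub_inv_pow_pos (hq : 1 < q) {n : ℕ} (hn : n ≠ 0) : 0 < 1 - q⁻¹ ^ n :=
  sub_pos.2 (pow_lt_one₀ (by positivity) (inv_lt_one_of_one_lt₀ hq) hn)

theorem glFactor_pos (hq : 1 < q) (M : ℕ) : 0 < glFactor q M :=
  Finset.prod_pos fun i _ => one_sub_inv_pow_pos hq i.succ_ne_zero

theorem tendsto_prod_one_sub_inv_pow (hq : 1 < q) (K : ℕ) :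
    Tendsto (fun M => ∏ j ∈ Finset.range K, (1 - q⁻¹ ^ (M + j + 1))) atTop (𝓝 1) := by
  have hgeom : Tendsto (fun n : ℕ => q⁻¹ ^ n) atTop (𝓝 0) :=
    tendsto_pow_atTop_nhds_zero_of_lt_one (by positivity) (inv_lt_one_of_one_lt₀ hq)
  have hfactor (j : ℕ) : Tendsto (fun M => 1 - q⁻¹ ^ (M + j + 1)) atTop (𝓝 1) := by
    simpa only [sub_zero, Function.comp_def, add_assoc] using
      (tendsto_const_nhds (x := (1 : ℝ))).sub (hgeom.comp (tendsto_add_atTop_nat (j + 1)))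
  simpa only [Finset.prod_const_one] using tendsto_finsetProd (Finset.range K) fun j _ => hfactor j

theorem tendsto_glFactor_sub_div (hq : 1 < q) (K : ℕ) :
    Tendsto (fun N => glFactor q (N - K) / glFactor q N) atTop (𝓝 1) := by
  have hlim := ((tendsto_prod_one_sub_inv_pow hq K).inv₀ one_ne_zero).comp (tendsto_sub_atTop_nat K)
  rw [inv_one] at hlim
  refine hlim.congr' ?_
  filter_upwards [eventually_ge_atTop K] with N hN
  obtain ⟨M, rfl⟩ := Nat.exists_eq_add_of_le' hN
  rw [Function.comp_apply, Nat.add_sub_cancel, glFactor_add, div_mul_cancel_left₀ (glFactor_pos hq _).ne']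

theorem tendsto_glOrder_ratio (hq : 1 < q) {K₁ K₂ K₃ n₃ S : ℕ} (h : K₁ + K₂ + K₃ = 2 * S + n₃) :
    Tendsto (fun N : ℕ => q ^ (2 * N * n₃) *
        (glOrder q (N - K₁) * glOrder q (N - K₂) * glOrder q (N - K₃)) /
        (glOrder q N * glOrder q (N - S) ^ 2))
      atTop (𝓝 (q ^ ((K₁ : ℤ) ^ 2 + (K₂ : ℤ) ^ 2 + (K₃ : ℤ) ^ 2 - 2 * (S : ℤ) ^ 2))) := by
  set C : ℤ := (K₁ : ℤ) ^ 2 + (K₂ : ℤ) ^ 2 + (K₃ : ℤ) ^ 2 - 2 * (S : ℤ) ^ 2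
  set r := fun K N => glFactor q (N - K) / glFactor q N
  have hlim : Tendsto (fun N => q ^ C * (r K₁ N * r K₂ N * r K₃ N) / r S N ^ 2) atTop (𝓝 (q ^ C)) := by
    have := ((tendsto_const_nhds (x := q ^ C)).mul (((tendsto_glFactor_sub_div hq K₁).mul
      (tendsto_glFactor_sub_div hq K₂)).mul (tendsto_glFactor_sub_div hq K₃))).div
      ((tendsto_glFactor_sub_div hq S).pow 2) (by norm_num)
    simp only [mul_one, one_pow, div_one] at this
    exact this
  refine hlim.congr' ?_
  filter_upwards [eventually_ge_atTop (K₁ + K₂ + K₃ + S)] with N hN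
  have hq₀ : q ≠ 0 := by positivity
  have hpow : q ^ (2 * N * n₃) * (q ^ ((N - K₁) ^ 2) * q ^ ((N - K₂) ^ 2) * q ^ ((N - K₃) ^ 2)) =
      q ^ C * (q ^ (N ^ 2) * (q ^ ((N - S) ^ 2)) ^ 2) := by
    simp only [← pow_mul, ← pow_add]
    rw [← zpow_natCast, ← zpow_natCast, ← zpow_add₀ hq₀]
    congr 1
    push_cast [Nat.cast_sub (show K₁ ≤ N by omega), Nat.cast_sub (show K₂ ≤ N by omega),
      Nat.cast_sub (show K₃ ≤ N by omega), Nat.cast_sub (show S ≤ N by omega)]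
    linear_combination multiplicity_exponent_eq h N
  have hPN := glFactor_pos hq N
  have hPS := glFactor_pos hq (N - S)
  simp only [r, glOrder]
  field_simp
  linear_combination (-(glFactor q (N - K₁) * glFactor q (N - K₂) * glFactor q (N - K₃))) * hpow

end

/-- Writing `c(M) = |GL(M,F)|`, if `K₁ + K₂ + K₃ = 2S + n₃` then
`q^{2Nn₃} · c(N−K₁) c(N−K₂) c(N−K₃) / (c(N) c(N−S)²) → q^{K₁²+K₂²+K₃²−2S²}` as `N → ∞`.
In particular the multiplicity factor `M(κ,N)²` of the `GL(N,q)` permutation orbifold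
converges and is `O(q^{−2Nn₃})`. -/
theorem gl_multiplicity_factor_tendsto (F : Type*) [Field F] [Fintype F]
    (K₁ K₂ K₃ n₃ S : ℕ) (h : K₁ + K₂ + K₃ = 2 * S + n₃) :
    Tendsto (fun N : ℕ =>
        (Fintype.card F : ℝ) ^ (2 * N * n₃) *
          ((Nat.card (GL (Fin (N - K₁)) F) : ℝ) * (Nat.card (GL (Fin (N - K₂)) F) : ℝ) *
            (Nat.card (GL (Fin (N - K₃)) F) : ℝ)) /
          ((Nat.card (GL (Fin N) F) : ℝ) * (Nat.card (GL (Fin (N - S)) F) : ℝ) ^ 2))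
      atTop
      (nhds ((Fintype.card F : ℝ) ^ ((K₁ : ℤ) ^ 2 + (K₂ : ℤ) ^ 2 + (K₃ : ℤ) ^ 2
        - 2 * (S : ℤ) ^ 2))) := by
  simp only [card_GL_fin_eq_glOrder]
  exact tendsto_glOrder_ratio (by exact_mod_cast Fintype.one_lt_card) h
end

section
/- Let F be a field and V a finite-dimensional vector space over F of dimension N, and let g : V → V be a linear automorphism with g ≠ id. Then there exists a linearly independent family w₁, …, w_N of N vectors in V such that g(w_i) ≠ w_i for every i. -/
open Module

/-- If `g` is a nontrivial linear automorphism of an `N`-dimensional vector space `V`, then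
there is a linearly independent family of `N` vectors of `V`, none of which is fixed by
`g`. -/
theorem exists_linearIndependent_not_fixed (F V : Type*) [Field F] [AddCommGroup V]
    [Module F V] [FiniteDimensional F V] (N : ℕ) (hN : finrank F V = N)
    (g : V ≃ₗ[F] V) (hg : g ≠ LinearEquiv.refl F V) :
    ∃ w : Fin N → V, LinearIndependent F w ∧ ∀ i, g (w i) ≠ w i := by
  classical
  let b : Basis (Fin N) F V := (Module.finBasis F V).reindex (finCongr hN)
  obtain ⟨j₀, hj₀⟩ : ∃ j, g (b j) ≠ b j := by
    by_contra h
    push_neg at h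
    exact hg (LinearEquiv.toLinearMap_injective (b.ext fun i => h i))
  set v := b j₀ with hv
  refine ⟨fun i => if g (b i) = b i then v + b i else b i, ?_, ?_⟩
  · rw [Fintype.linearIndependent_iff]
    intro c hc
    set t := ∑ k, if g (b k) = b k then c k else 0 with ht
    have hsum : ∑ i, (c i + if i = j₀ then t else 0) • b i = 0 := by
      have h1 : ∑ i, (c i + if i = j₀ then t else 0) • b i
          = (∑ i, c i • b i) + t • v := by
        simp only [add_smul, Finset.sum_add_distrib, ite_smul, zero_smul,
          Finset.sum_ite_eq' Finset.univ j₀, Finset.mem_univ, if_true, hv]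
      have h2 : ∑ i, c i • (if g (b i) = b i then v + b i else b i)
          = (∑ i, c i • b i) + t • v := by
        rw [ht, Finset.sum_smul]
        rw [← Finset.sum_add_distrib]
        congr 1
        ext i
        by_cases h : g (b i) = b i <;> simp [h, smul_add, add_comm]
      rw [h1, ← h2, hc]
    have hd := Fintype.linearIndependent_iff.mp b.linearIndependent _ hsum
    have hne : ∀ i, i ≠ j₀ → c i = 0 := by
      intro i hi
      have := hd i
      simpa [hi] using this
    have ht0 : t = 0 := by
      rw [ht]
      apply Finset.sum_eq_zero
      intro k _
      by_cases h : g (b k) = b k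
      · have hk : k ≠ j₀ := by rintro rfl; exact hj₀ h
        simp [h, hne k hk]
      · simp [h]
    intro i
    by_cases hi : i = j₀
    · have := hd i
      simpa [hi, ht0] using this
    · exact hne i hi
  · intro i
    by_cases h : g (b i) = b i
    · simp only [h, if_true]
      intro hcon
      apply hj₀
      have hmid : g v + b i = v + b i := by
        conv_lhs => rw [← h, ← map_add]
        exact hcon
      exact add_right_cancel hmid
    · simp only [h, if_false]
      exact h
end
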